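/- Discrete Hamiltonian Helmholtz theorem (scalar sufficiency): Let N ≥ 2 and X_Q, X_P : ℝ × ℝ → ℝ be C¹ with ∂X_Q/∂q(q,p) + ∂X_P/∂p(q,p) = 0 for all (q,p). Define H(q,p) = ∫_0^1 [ p·X_Q(λq,λp) − q·X_P(λq,λp) ] dλ. Then ∂H/∂p = X_Q and ∂H/∂q = −X_P, and consequently every solution (Q,P) of the discrete system ΔQ(k) = X_Q(Q(k),P(k)), ∇P(k) = X_P(Q(k),P(k)) (1 ≤ k ≤ N−1) is a critical point of the discrete functional L(Q,P) = ∑_{k=0}^{N−1}[P(k)(Q(k+1)−Q(k)) − H(Q(k),P(k))] with respect to variations vanishing at the endpoints, and conversely. -/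

import Mathlib

/-!
The field `(X_Q, X_P)` is Hamiltonian iff the 1-form `ω = X_Q dp - X_P dq` is exact, with `dH = ω`.
Divergence-freeness of the field is exactly closedness of `ω`, and on the star-shaped plane the
Poincaré potential `H(x) = ∫₀¹ ω(λx)(x) dλ` of a closed form satisfies `dH = ω`: differentiating
under the integral, closedness turns the integrand of `dH(x)(w)` into `d/dλ [λ ω(λx)(w)]`.
The discrete statement is then the discrete Hamilton principle: by summation by parts the first
variation of the action along `(U, V)` is `∑ₖ (Vₖ (ΔQₖ - X_Q) - Uₖ (∇Pₖ - X_P))`, which vanishes for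
all variations fixing the endpoints iff both brackets vanish at every interior node.
-/

open Set Finset

section Poincare

variable {E F : Type*} [NormedAddCommGroup E] [NormedSpace ℝ E]
  [NormedAddCommGroup F] [NormedSpace ℝ F]

theorem intervalIntegral.hasFDerivAt_integral_of_continuous_fderiv [LocallyCompactSpace E]
    {G : E → ℝ → F} {G' : E → ℝ → E →L[ℝ] F} {a b : ℝ}
    (hG : Continuous (Function.uncurry G)) (hG' : Continuous (Function.uncurry G'))
    (hderiv : ∀ y t, HasFDerivAt (G · t) (G' y t) y) (x : E) :
    HasFDerivAt (fun y => ∫ t in a..b, G y t) (∫ t in a..b, G' x t) x := by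
  obtain ⟨K, hK, hKx⟩ := exists_compact_mem_nhds x
  obtain ⟨C, hC⟩ := (hK.prod isCompact_uIcc).exists_bound_of_continuousOn
    (hG'.continuousOn (s := K ×ˢ uIcc a b))
  refine intervalIntegral.hasFDerivAt_integral_of_dominated_of_fderiv_le (bound := fun _ => C)
    hKx (.of_forall fun y => (hG.uncurry_left y).aestronglyMeasurable)
    ((hG.uncurry_left x).intervalIntegrable a b)
    (hG'.uncurry_left x).aestronglyMeasurable ?_ intervalIntegrable_const
    (.of_forall fun t _ y _ => hderiv y t)
  exact .of_forall fun t ht y hy => hC (y, t) ⟨hy, uIoc_subset_uIcc ht⟩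

theorem ContinuousLinearMap.continuous_flip {G : Type*} [NormedAddCommGroup G]
    [NormedSpace ℝ G] :
    Continuous (flip : (E →L[ℝ] F →L[ℝ] G) → F →L[ℝ] E →L[ℝ] G) := by
  rw [← coe_flipₗᵢ]
  exact LinearIsometryEquiv.continuous _

noncomputable def poincarePotential (ω : E → E →L[ℝ] F) (x : E) : F :=
  ∫ t in (0:ℝ)..1, ω (t • x) x

theorem hasDerivAt_smul_comp_smul_apply {ω : E → E →L[ℝ] F} {x : E} (w : E) {t : ℝ}
    (hω : DifferentiableAt ℝ ω (t • x)) :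
    HasDerivAt (fun s : ℝ => s • ω (s • x) w) (ω (t • x) w + t • fderiv ℝ ω (t • x) x w) t := by
  have hx : HasDerivAt (fun s : ℝ => s • x) x t := by
    simpa only [one_smul] using (hasDerivAt_id' t).smul_const x
  have hωx : HasDerivAt (fun s : ℝ => ω (s • x)) (fderiv ℝ ω (t • x) x) t :=
    hω.hasFDerivAt.comp_hasDerivAt t hx
  simpa [add_comm] using (hasDerivAt_id' t).fun_smul (hωx.clm_apply (hasDerivAt_const t w))

theorem hasFDerivAt_comp_smul_apply_self {ω : E → E →L[ℝ] F} {y : E} {t : ℝ}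
    (hω : DifferentiableAt ℝ ω (t • y)) :
    HasFDerivAt (fun y => ω (t • y) y) (ω (t • y) + t • (fderiv ℝ ω (t • y)).flip y) y := by
  have hsc : HasFDerivAt (fun y : E => t • y) (t • ContinuousLinearMap.id ℝ E) y :=
    (hasFDerivAt_id y).const_smul t
  refine ((hω.hasFDerivAt.comp y hsc).clm_apply (hasFDerivAt_id y)).congr_fderiv ?_
  ext w
  simp

theorem hasFDerivAt_poincarePotential [LocallyCompactSpace E] [CompleteSpace F]
    {ω : E → E →L[ℝ] F} (hω : ContDiff ℝ 1 ω)
    (hclosed : ∀ z v w, fderiv ℝ ω z v w = fderiv ℝ ω z w v) (x : E) :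
    HasFDerivAt (poincarePotential ω) (ω x) x := by
  have hdω := hω.differentiable one_ne_zero
  have hωc := hω.continuous
  have hG' : Continuous (Function.uncurry fun y (t : ℝ) =>
      ω (t • y) + t • (fderiv ℝ ω (t • y)).flip y) := by
    have := hω.continuous_fderiv one_ne_zero
    have := ContinuousLinearMap.continuous_flip (E := E) (F := E) (G := F)
    fun_prop
  have hint := intervalIntegral.hasFDerivAt_integral_of_continuous_fderiv (a := 0) (b := 1)
    (G := fun y t => ω (t • y) y) (by fun_prop) hG'
    (fun y t => hasFDerivAt_comp_smul_apply_self (hdω _)) x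
  suffices h : ∫ t in (0:ℝ)..1, ω (t • x) + t • (fderiv ℝ ω (t • x)).flip x = ω x by
    rwa [h] at hint
  ext w
  rw [ContinuousLinearMap.intervalIntegral_apply ((hG'.uncurry_left x).intervalIntegrable 0 1)]
  have hderiv : ∀ t ∈ uIcc (0:ℝ) 1, HasDerivAt (fun s : ℝ => s • ω (s • x) w)
      ((ω (t • x) + t • (fderiv ℝ ω (t • x)).flip x) w) t := fun t _ => by
    simpa only [add_apply, smul_apply, ContinuousLinearMap.flip_apply, hclosed _ w x] using
      hasDerivAt_smul_comp_smul_apply w (hdω (t • x))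
  rw [intervalIntegral.integral_eq_sub_of_hasDerivAt hderiv
    (((hG'.uncurry_left x).clm_apply continuous_const).intervalIntegrable 0 1)]
  simp

end Poincare

theorem HasFDerivAt.hasDerivAt_fst_slice {f : ℝ × ℝ → ℝ} {f' : ℝ × ℝ →L[ℝ] ℝ} {q p : ℝ}
    (hf : HasFDerivAt f f' (q, p)) : HasDerivAt (fun q' => f (q', p)) (f' (1, 0)) q :=
  hf.comp_hasDerivAt q ((hasDerivAt_id q).prodMk (hasDerivAt_const q p))

theorem HasFDerivAt.hasDerivAt_snd_slice {f : ℝ × ℝ → ℝ} {f' : ℝ × ℝ →L[ℝ] ℝ} {q p : ℝ}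
    (hf : HasFDerivAt f f' (q, p)) : HasDerivAt (fun p' => f (q, p')) (f' (0, 1)) p :=
  hf.comp_hasDerivAt p ((hasDerivAt_const p q).prodMk (hasDerivAt_id p))

theorem ContinuousLinearMap.apply_eq_fst_mul_add_snd_mul (T : ℝ × ℝ →L[ℝ] ℝ) (v : ℝ × ℝ) :
    T v = v.1 * T (1, 0) + v.2 * T (0, 1) := by
  conv_lhs => rw [show v = v.1 • ((1 : ℝ), (0 : ℝ)) + v.2 • ((0 : ℝ), (1 : ℝ)) by ext <;> simp]
  rw [map_add, map_smul, map_smul, smul_eq_mul, smul_eq_mul]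

section Hamiltonian

open ContinuousLinearMap

variable {XQ XP : ℝ × ℝ → ℝ}

/-- The 1-form `X_Q dp - X_P dq`, whose potentials are the Hamiltonians of `(X_Q, X_P)`. -/
noncomputable def hamiltonianForm (XQ XP : ℝ × ℝ → ℝ) (z : ℝ × ℝ) : ℝ × ℝ →L[ℝ] ℝ :=
  XQ z • snd ℝ ℝ ℝ - XP z • fst ℝ ℝ ℝ

@[simp]
theorem hamiltonianForm_apply (z w : ℝ × ℝ) :
    hamiltonianForm XQ XP z w = XQ z * w.2 - XP z * w.1 := rfl

theorem contDiff_hamiltonianForm (hXQ : ContDiff ℝ 1 XQ) (hXP : ContDiff ℝ 1 XP) :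
    ContDiff ℝ 1 (hamiltonianForm XQ XP) :=
  (hXQ.smul contDiff_const).sub (hXP.smul contDiff_const)

theorem hasFDerivAt_hamiltonianForm {z : ℝ × ℝ} (hXQ : DifferentiableAt ℝ XQ z)
    (hXP : DifferentiableAt ℝ XP z) :
    HasFDerivAt (hamiltonianForm XQ XP)
      ((fderiv ℝ XQ z).smulRight (snd ℝ ℝ ℝ) - (fderiv ℝ XP z).smulRight (fst ℝ ℝ ℝ)) z :=
  (hXQ.hasFDerivAt.smul_const (snd ℝ ℝ ℝ)).sub (hXP.hasFDerivAt.smul_const (fst ℝ ℝ ℝ))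

theorem fderiv_hamiltonianForm_symm {z : ℝ × ℝ} (hXQ : DifferentiableAt ℝ XQ z)
    (hXP : DifferentiableAt ℝ XP z) (hdiv : fderiv ℝ XQ z (1, 0) + fderiv ℝ XP z (0, 1) = 0)
    (v w : ℝ × ℝ) :
    fderiv ℝ (hamiltonianForm XQ XP) z v w = fderiv ℝ (hamiltonianForm XQ XP) z w v := by
  simp only [(hasFDerivAt_hamiltonianForm hXQ hXP).fderiv, sub_apply, smulRight_apply, smul_apply,
    coe_snd', coe_fst', smul_eq_mul]
  rw [apply_eq_fst_mul_add_snd_mul (fderiv ℝ XQ z) v, apply_eq_fst_mul_add_snd_mul _ w,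
    apply_eq_fst_mul_add_snd_mul (fderiv ℝ XP z) v, apply_eq_fst_mul_add_snd_mul _ w]
  linear_combination (v.1 * w.2 - v.2 * w.1) * hdiv

theorem poincarePotential_hamiltonianForm (q p : ℝ) :
    poincarePotential (hamiltonianForm XQ XP) (q, p)
      = ∫ l in (0:ℝ)..1, (p * XQ (l * q, l * p) - q * XP (l * q, l * p)) := by
  simp only [poincarePotential, hamiltonianForm_apply, Prod.smul_mk, smul_eq_mul, mul_comm p,
    mul_comm q]

end Hamiltonian

section DiscreteAction

variable {N : ℕ}

def discreteAction (N : ℕ) (H : ℝ → ℝ → ℝ) (Q P : ℕ → ℝ) : ℝ :=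
  ∑ k ∈ range N, (P k * (Q (k + 1) - Q k) - H (Q k) (P k))

theorem hasDerivAt_discreteAction {H : ℝ → ℝ → ℝ} {Q P : ℕ → ℝ} {dH : ℕ → ℝ × ℝ →L[ℝ] ℝ}
    (hH : ∀ k, HasFDerivAt (Function.uncurry H) (dH k) (Q k, P k)) (U V : ℕ → ℝ) :
    HasDerivAt
      (fun ε : ℝ => discreteAction N H (fun k => Q k + ε * U k) (fun k => P k + ε * V k))
      (∑ k ∈ range N, (V k * (Q (k + 1) - Q k) + P k * (U (k + 1) - U k) - dH k (U k, V k)))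
      0 := by
  have hline : ∀ (a b : ℝ), HasDerivAt (fun ε : ℝ => a + ε * b) b 0 := fun a b => by
    simpa using ((hasDerivAt_id' (0 : ℝ)).mul_const b).const_add a
  refine HasDerivAt.fun_sum fun k _ => ?_
  have hH' : HasDerivAt (fun ε : ℝ => H (Q k + ε * U k) (P k + ε * V k))
      (dH k (U k, V k)) 0 := by
    simpa [Function.comp_def] using (hH k).comp_hasDerivAt_of_eq (0 : ℝ)
      ((hline (Q k) (U k)).prodMk (hline (P k) (V k))) (by simp)
  simpa using ((hline (P k) (V k)).fun_mul
    ((hline (Q (k + 1)) (U (k + 1))).fun_sub (hline (Q k) (U k)))).fun_sub hH'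

-- At `k = 0` the truncated `P (0 - 1) = P 0` is harmless since `U 0 = 0`.
theorem sum_range_mul_sub_eq_neg_sum_range_sub_mul (P U : ℕ → ℝ) (hU0 : U 0 = 0)
    (hUN : U N = 0) :
    ∑ k ∈ range N, P k * (U (k + 1) - U k) = -∑ k ∈ range N, (P k - P (k - 1)) * U k := by
  have hshift : ∑ k ∈ range N, P k * U (k + 1) = ∑ k ∈ range N, P (k - 1) * U k := by
    have h := sum_range_succ' (fun k => P (k - 1) * U k) N
    rw [sum_range_succ, hUN, hU0] at h
    simpa using h.symm
  simp only [mul_sub, sub_mul, sum_sub_distrib, hshift]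
  ring

theorem deriv_discreteAction {H : ℝ → ℝ → ℝ} {Q P : ℕ → ℝ} {dH : ℕ → ℝ × ℝ →L[ℝ] ℝ}
    (hH : ∀ k, HasFDerivAt (Function.uncurry H) (dH k) (Q k, P k)) {U V : ℕ → ℝ}
    (hU0 : U 0 = 0) (hUN : U N = 0) :
    deriv (fun ε : ℝ => discreteAction N H (fun k => Q k + ε * U k)
        (fun k => P k + ε * V k)) 0
      = ∑ k ∈ range N, (V k * (Q (k + 1) - Q k) - U k * (P k - P (k - 1)) - dH k (U k, V k)) := by
  rw [(hasDerivAt_discreteAction hH U V).deriv, sum_sub_distrib, sum_add_distrib,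
    sum_range_mul_sub_eq_neg_sum_range_sub_mul P U hU0 hUN, sum_sub_distrib, sum_sub_distrib]
  simp only [mul_comm (U _)]
  ring

theorem eq_zero_of_forall_sum_range_mul_eq_zero {a : ℕ → ℝ}
    (h : ∀ U : ℕ → ℝ, U 0 = 0 → U N = 0 → ∑ k ∈ range N, U k * a k = 0)
    {k : ℕ} (hk0 : 0 < k) (hkN : k < N) : a k = 0 := by
  simpa [hkN] using h (fun j => if j = k then 1 else 0) (if_neg hk0.ne) (if_neg hkN.ne')

theorem forall_sum_range_eq_zero_iff {a b : ℕ → ℝ} :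
    (∀ U V : ℕ → ℝ, U 0 = 0 → U N = 0 → V 0 = 0 → V N = 0 →
      ∑ k ∈ range N, (V k * a k - U k * b k) = 0) ↔
    ∀ k, 0 < k → k < N → a k = 0 ∧ b k = 0 := by
  constructor
  · intro h k hk0 hkN
    refine ⟨eq_zero_of_forall_sum_range_mul_eq_zero (fun V hV0 hVN => ?_) hk0 hkN,
      eq_zero_of_forall_sum_range_mul_eq_zero (fun U hU0 hUN => ?_) hk0 hkN⟩
    · simpa using h 0 V rfl rfl hV0 hVN
    · simpa using h U 0 hU0 hUN rfl rfl
  · intro h U V hU0 _ hV0 _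
    refine sum_eq_zero fun k hk => ?_
    rcases Nat.eq_zero_or_pos k with rfl | hk0
    · simp [hU0, hV0]
    · obtain ⟨ha, hb⟩ := h k hk0 (mem_range.mp hk)
      simp [ha, hb]

end DiscreteAction

theorem discrete_helmholtz_scalar_sufficiency_general (N : ℕ)
    (XQ XP : ℝ × ℝ → ℝ) (hXQ : ContDiff ℝ 1 XQ) (hXP : ContDiff ℝ 1 XP)
    (hdiv : ∀ q p : ℝ,
      deriv (fun q' => XQ (q', p)) q + deriv (fun p' => XP (q, p')) p = 0)
    (H : ℝ → ℝ → ℝ)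
    (hH : ∀ q p : ℝ, H q p =
      ∫ l in (0:ℝ)..1, (p * XQ (l * q, l * p) - q * XP (l * q, l * p))) :
    (∀ q p : ℝ,
        deriv (fun p' => H q p') p = XQ (q, p) ∧
        deriv (fun q' => H q' p) q = - XP (q, p)) ∧
    (∀ Q P : ℕ → ℝ,
      (∀ k, 1 ≤ k → k ≤ N - 1 →
          Q (k + 1) - Q k = XQ (Q k, P k) ∧ P k - P (k - 1) = XP (Q k, P k))
      ↔ (∀ U V : ℕ → ℝ, U 0 = 0 → U N = 0 → V 0 = 0 → V N = 0 →
          deriv (fun ε : ℝ => ∑ k ∈ Finset.range N,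
            ((P k + ε * V k) * ((Q (k + 1) + ε * U (k + 1)) - (Q k + ε * U k))
              - H (Q k + ε * U k) (P k + ε * V k))) 0 = 0)) := by
  have hdXQ := hXQ.differentiable one_ne_zero
  have hdXP := hXP.differentiable one_ne_zero
  have hclosed : ∀ z v w, fderiv ℝ (hamiltonianForm XQ XP) z v w
      = fderiv ℝ (hamiltonianForm XQ XP) z w v := fun ⟨q, p⟩ =>
    fderiv_hamiltonianForm_symm (hdXQ _) (hdXP _) <| by
      rw [← (hdXQ _).hasFDerivAt.hasDerivAt_fst_slice.deriv,
        ← (hdXP _).hasFDerivAt.hasDerivAt_snd_slice.deriv]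
      exact hdiv q p
  have hHpot : Function.uncurry H = poincarePotential (hamiltonianForm XQ XP) :=
    funext fun ⟨q, p⟩ => (hH q p).trans (poincarePotential_hamiltonianForm q p).symm
  have hdH : ∀ z, HasFDerivAt (Function.uncurry H) (hamiltonianForm XQ XP z) z := fun z =>
    hHpot ▸ hasFDerivAt_poincarePotential (contDiff_hamiltonianForm hXQ hXP) hclosed z
  refine ⟨fun q p => ⟨?_, ?_⟩, fun Q P => ?_⟩
  · simpa using (hdH (q, p)).hasDerivAt_snd_slice.deriv
  · simpa using (hdH (q, p)).hasDerivAt_fst_slice.deriv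
  have hvariation : ∀ U V : ℕ → ℝ, U 0 = 0 → U N = 0 →
      deriv (fun ε : ℝ => discreteAction N H (fun k => Q k + ε * U k)
          (fun k => P k + ε * V k)) 0
        = ∑ k ∈ range N, (V k * (Q (k + 1) - Q k - XQ (Q k, P k))
            - U k * (P k - P (k - 1) - XP (Q k, P k))) := fun U V hU0 hUN => by
    rw [deriv_discreteAction (fun k => hdH (Q k, P k)) hU0 hUN]
    exact sum_congr rfl fun k _ => by simp only [hamiltonianForm_apply]; ring
  calc _ ↔ ∀ k, 0 < k → k < N → Q (k + 1) - Q k - XQ (Q k, P k) = 0 ∧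
        P k - P (k - 1) - XP (Q k, P k) = 0 := by
        simp only [sub_eq_zero]
        exact forall_congr' fun k => ⟨fun h hk0 hkN => h hk0 (by omega),
          fun h hk0 hkN => h hk0 (by omega)⟩
    _ ↔ _ := forall_sum_range_eq_zero_iff.symm
    _ ↔ _ := forall_congr' fun U => forall_congr' fun V => forall_congr' fun hU0 =>
        forall_congr' fun hUN => by rw [← hvariation U V hU0 hUN]; rfl

/-- Discrete Hamiltonian Helmholtz theorem (scalar sufficiency): if the
vector field `(X_Q, X_P)` is divergence free, then the homotopy formula
`H(q,p) = ∫_0^1 (p·X_Q(λq,λp) - q·X_P(λq,λp)) dλ` satisfies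
`∂H/∂p = X_Q`, `∂H/∂q = -X_P`, and a discrete curve `(Q,P)` solves the
discrete system `ΔQ = X_Q(Q,P)`, `∇P = X_P(Q,P)` on interior points iff it
is a critical point of the discrete action for variations vanishing at the
endpoints. -/
theorem discrete_helmholtz_scalar_sufficiency (N : ℕ) (hN : 2 ≤ N)
    (XQ XP : ℝ × ℝ → ℝ) (hXQ : ContDiff ℝ 1 XQ) (hXP : ContDiff ℝ 1 XP)
    (hdiv : ∀ q p : ℝ,
      deriv (fun q' => XQ (q', p)) q + deriv (fun p' => XP (q, p')) p = 0)
    (H : ℝ → ℝ → ℝ)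
    (hH : ∀ q p : ℝ, H q p =
      ∫ l in (0:ℝ)..1, (p * XQ (l * q, l * p) - q * XP (l * q, l * p))) :
    (∀ q p : ℝ,
        deriv (fun p' => H q p') p = XQ (q, p) ∧
        deriv (fun q' => H q' p) q = - XP (q, p)) ∧
    (∀ Q P : ℕ → ℝ,
      (∀ k, 1 ≤ k → k ≤ N - 1 →
          Q (k + 1) - Q k = XQ (Q k, P k) ∧ P k - P (k - 1) = XP (Q k, P k))
      ↔ (∀ U V : ℕ → ℝ, U 0 = 0 → U N = 0 → V 0 = 0 → V N = 0 →
          deriv (fun ε : ℝ => ∑ k ∈ Finset.range N,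
            ((P k + ε * V k) * ((Q (k + 1) + ε * U (k + 1)) - (Q k + ε * U k))
              - H (Q k + ε * U k) (P k + ε * V k))) 0 = 0)) :=
  discrete_helmholtz_scalar_sufficiency_general N XQ XP hXQ hXP hdiv H hH
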